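/- Let S be a 1-synchronizable system, τ ∈ Tr₀(S) a synchronous trace, and a,b messages with src(a) ≠ src(b) such that τ·!a and τ·!b are 1-bounded traces of S. Then for any two of the six shuffles σ₁, σ₂ of !a·?a with !b·?b, both τ·σ₁ and τ·σ₂ are traces of S, and τ·σ₁ is S-equivalent to τ·σ₂ (they lead to the same configuration). -/
import Mathlib


/-! Communicating finite state machines: messages, traces, systems. -/

structure MessageSet where
  msgs : Finset ℕ
  p : ℕ
  src : ℕ → ℕ
  dst : ℕ → ℕ

def MessageSet.WF (M : MessageSet) : Prop :=
  1 ≤ M.p ∧ ∀ a ∈ M.msgs, M.src a ≠ M.dst a ∧ M.src a < M.p ∧ M.dst a < M.p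

inductive Act where
  | send (a : ℕ)
  | recv (a : ℕ)
deriving DecidableEq

abbrev Trace := List Act

def Act.msg : Act → ℕ
  | .send a => a
  | .recv a => a

def peerOf (M : MessageSet) : Act → ℕ
  | .send a => M.src a
  | .recv a => M.dst a

/-- Send projection: the sequence of messages sent in a trace. -/
def sendProj (τ : Trace) : List ℕ :=
  τ.filterMap (fun α => match α with | .send a => some a | .recv _ => none)

/-- Projection of a trace on the actions of peer `i`. -/
def projPeer (M : MessageSet) (i : ℕ) (τ : Trace) : Trace :=
  τ.filter (fun α => peerOf M α = i)

def sentOn (M : MessageSet) (i j : ℕ) (τ : Trace) : List ℕ :=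
  τ.filterMap (fun α => match α with
    | .send a => if M.src a = i ∧ M.dst a = j then some a else none
    | .recv _ => none)

def recvOn (M : MessageSet) (i j : ℕ) (τ : Trace) : List ℕ :=
  τ.filterMap (fun α => match α with
    | .recv a => if M.src a = i ∧ M.dst a = j then some a else none
    | .send _ => none)

/-- A trace is FIFO if on every channel, in every prefix, the receives form a
prefix of the sends. -/
def Fifo (M : MessageSet) (τ : Trace) : Prop :=
  ∀ τ', τ' <+: τ → ∀ i j, recvOn M i j τ' <+: sentOn M i j τ'

/-- `k`-bounded FIFO trace: the buffer of each channel never exceeds `k`. -/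
def BoundedFifo (M : MessageSet) (k : ℕ) (τ : Trace) : Prop :=
  Fifo M τ ∧ ∀ τ', τ' <+: τ → ∀ i j,
    (sentOn M i j τ').length ≤ (recvOn M i j τ').length + k

/-- `!?a₁ ⬝ !?a₂ ⋯ !?aₙ` -/
def syncOf (l : List ℕ) : Trace := l.flatMap (fun a => [Act.send a, Act.recv a])

def Synchronous (τ : Trace) : Prop := ∃ l : List ℕ, τ = syncOf l

def CausalEquiv (M : MessageSet) (τ₁ τ₂ : Trace) : Prop :=
  Fifo M τ₁ ∧ Fifo M τ₂ ∧ ∀ i, projPeer M i τ₁ = projPeer M i τ₂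

/-- A system of communicating machines: for each peer `i`, an initial state and
a transition relation (all states are accepting). -/
structure System where
  init : ℕ → ℕ
  delta : ℕ → ℕ → Act → ℕ → Prop

/-- Well-formedness: peer `i` performs only actions of peer `i`, on messages of `M`. -/
def System.WF (S : System) (M : MessageSet) : Prop :=
  ∀ i q α q', S.delta i q α q' → peerOf M α = i ∧ α.msg ∈ M.msgs

/-- The machines are finite-state. -/
def System.FiniteDelta (S : System) : Prop :=
  Set.Finite {x : ℕ × ℕ × Act × ℕ | S.delta x.1 x.2.1 x.2.2.1 x.2.2.2}

/-- A configuration: local states, and one FIFO buffer per channel `(i,j)`. -/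
abbrev Config := (ℕ → ℕ) × (ℕ → ℕ → List ℕ)

def Stable (c : Config) : Prop := ∀ i j, c.2 i j = []

def Step (M : MessageSet) (S : System) (c : Config) : Act → Config → Prop
  | .send a, c' =>
      S.delta (M.src a) (c.1 (M.src a)) (.send a) (c'.1 (M.src a)) ∧
      (∀ k, k ≠ M.src a → c'.1 k = c.1 k) ∧
      c'.2 (M.src a) (M.dst a) = c.2 (M.src a) (M.dst a) ++ [a] ∧
      (∀ k l, ¬(k = M.src a ∧ l = M.dst a) → c'.2 k l = c.2 k l)
  | .recv a, c' =>
      S.delta (M.dst a) (c.1 (M.dst a)) (.recv a) (c'.1 (M.dst a)) ∧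
      (∀ k, k ≠ M.dst a → c'.1 k = c.1 k) ∧
      c.2 (M.src a) (M.dst a) = a :: c'.2 (M.src a) (M.dst a) ∧
      (∀ k l, ¬(k = M.src a ∧ l = M.dst a) → c'.2 k l = c.2 k l)

inductive Exec (M : MessageSet) (S : System) : Config → Trace → Config → Prop
  | refl (c : Config) : Exec M S c [] c
  | step {c c' c'' : Config} {α : Act} {τ : Trace} :
      Step M S c α c' → Exec M S c' τ c'' → Exec M S c (α :: τ) c''

def initConfig (S : System) : Config := (S.init, fun _ _ => [])

def TraceOf (M : MessageSet) (S : System) (τ : Trace) : Prop :=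
  ∃ c, Exec M S (initConfig S) τ c

/-- `Trk M S 0` = synchronous traces; `Trk M S k` (`k ≥ 1`) = `k`-bounded traces. -/
def Trk (M : MessageSet) (S : System) : ℕ → Trace → Prop
  | 0, τ => TraceOf M S τ ∧ Synchronous τ
  | (k+1), τ => TraceOf M S τ ∧ BoundedFifo M (k+1) τ

def Trω (M : MessageSet) (S : System) (τ : Trace) : Prop := ∃ k, Trk M S k τ

/-- Two traces are `S`-equivalent if they lead from the initial configuration to
a common configuration. -/
def SEquiv (M : MessageSet) (S : System) (τ₁ τ₂ : Trace) : Prop :=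
  ∃ c, Exec M S (initConfig S) τ₁ c ∧ Exec M S (initConfig S) τ₂ c

/-- Send-trace language. -/
def STw (M : MessageSet) (S : System) (T : Trace → Prop) : Set (List ℕ) :=
  {w | ∃ τ, T τ ∧ sendProj τ = w}

/-- Send traces enriched with the reached stable configurations. -/
def STc (M : MessageSet) (S : System) (T : Trace → Prop) :
    Set (List ℕ ⊕ List ℕ × Config) :=
  {x | (∃ τ, T τ ∧ x = Sum.inl (sendProj τ)) ∨
       (∃ τ c, T τ ∧ Exec M S (initConfig S) τ c ∧ Stable c ∧
          x = Sum.inr (sendProj τ, c))}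

def kSync (M : MessageSet) (S : System) (k : ℕ) : Prop :=
  STc M S (Trk M S 0) = STc M S (Trk M S k)

def Synchronizable (M : MessageSet) (S : System) : Prop :=
  STc M S (Trk M S 0) = STc M S (Trω M S)

def LangSync (M : MessageSet) (S : System) : Prop :=
  STw M S (Trk M S 0) = STw M S (Trω M S)

inductive Shuffle : List Act → List Act → List Act → Prop
  | nil : Shuffle [] [] []
  | left {u v w : List Act} (a : Act) : Shuffle u v w → Shuffle (a :: u) v (a :: w)
  | right {u v w : List Act} (b : Act) : Shuffle u v w → Shuffle u (b :: v) (b :: w)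

inductive NShuffle : List ℕ → List ℕ → List ℕ → Prop
  | nil : NShuffle [] [] []
  | left {u v w : List ℕ} (a : ℕ) : NShuffle u v w → NShuffle (a :: u) v (a :: w)
  | right {u v w : List ℕ} (b : ℕ) : NShuffle u v w → NShuffle u (b :: v) (b :: w)

inductive PPath (S : System) (i : ℕ) : ℕ → Trace → Prop
  | nil (q : ℕ) : PPath S i q []
  | cons {q q' : ℕ} {α : Act} {w : Trace} :
      S.delta i q α q' → PPath S i q' w → PPath S i q (α :: w)

/-- The language of peer `i` (all states accepting). -/
def Lang (S : System) (i : ℕ) : Set Trace := {w | PPath S i (S.init i) w}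

def prefCl (L : Set Trace) : Set Trace := {w | ∃ v ∈ L, w <+: v}

def OrientedRing (M : MessageSet) : Prop :=
  1 ≤ M.p ∧ ∀ i j, (∃ a ∈ M.msgs, M.src a = i ∧ M.dst a = j) ↔
    (i < M.p ∧ j = (i + 1) % M.p)

set_option maxHeartbeats 1000000

namespace SSD

/-- Local path of peer `i` with recorded endpoint. -/
inductive LPath (S : System) (i : ℕ) : ℕ → Trace → ℕ → Prop
  | nil (q : ℕ) : LPath S i q [] q
  | cons {q q' q'' : ℕ} {α : Act} {w : Trace} :
      S.delta i q α q' → LPath S i q' w q'' → LPath S i q (α :: w) q''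

variable {M : MessageSet} {S : System}

lemma sentOn_append (i j : ℕ) (u v : Trace) :
    sentOn M i j (u ++ v) = sentOn M i j u ++ sentOn M i j v := by
  simp [sentOn]

lemma recvOn_append (i j : ℕ) (u v : Trace) :
    recvOn M i j (u ++ v) = recvOn M i j u ++ recvOn M i j v := by
  simp [recvOn]

lemma projPeer_append (i : ℕ) (u v : Trace) :
    projPeer M i (u ++ v) = projPeer M i u ++ projPeer M i v := by
  simp [projPeer]

lemma sendProj_append (u v : Trace) : sendProj (u ++ v) = sendProj u ++ sendProj v := by
  simp [sendProj]

lemma sendProj_syncOf (l : List ℕ) : sendProj (syncOf l) = l := by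
  induction l with
  | nil => rfl
  | cons x l ih => simpa [syncOf, sendProj] using ih

lemma syncOf_append (l l' : List ℕ) : syncOf (l ++ l') = syncOf l ++ syncOf l' := by
  simp [syncOf]

lemma sync_bal (i j : ℕ) (l : List ℕ) :
    sentOn M i j (syncOf l) = recvOn M i j (syncOf l) := by
  induction l with
  | nil => rfl
  | cons x l ih =>
    by_cases h : M.src x = i ∧ M.dst x = j <;>
      simp [syncOf, sentOn, recvOn, h] at * <;> simpa [sentOn, recvOn] using ih


lemma sentOn_cons_send (i j x : ℕ) (w : Trace) :
    sentOn M i j (Act.send x :: w) =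
      (if M.src x = i ∧ M.dst x = j then [x] else []) ++ sentOn M i j w := by
  by_cases h : M.src x = i ∧ M.dst x = j <;> simp [sentOn, h]

lemma sentOn_cons_recv (i j x : ℕ) (w : Trace) :
    sentOn M i j (Act.recv x :: w) = sentOn M i j w := by simp [sentOn]

lemma recvOn_cons_recv (i j x : ℕ) (w : Trace) :
    recvOn M i j (Act.recv x :: w) =
      (if M.src x = i ∧ M.dst x = j then [x] else []) ++ recvOn M i j w := by
  by_cases h : M.src x = i ∧ M.dst x = j <;> simp [recvOn, h]

lemma recvOn_cons_send (i j x : ℕ) (w : Trace) :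
    recvOn M i j (Act.send x :: w) = recvOn M i j w := by simp [recvOn]

lemma prefix_cons_cases {α : Type} {x : α} {xs ρ : List α} (h : ρ <+: x :: xs) :
    ρ = [] ∨ ∃ t, ρ = x :: t ∧ t <+: xs := by
  rcases ρ with _ | ⟨y, t⟩
  · exact Or.inl rfl
  · rcases List.cons_prefix_cons.mp h with ⟨rfl, ht⟩
    exact Or.inr ⟨t, rfl, ht⟩

lemma prefix_append_cases {α : Type} :
    ∀ (u : List α) {v ρ : List α}, ρ <+: u ++ v →
      ρ <+: u ∨ ∃ ρ', ρ = u ++ ρ' ∧ ρ' <+: v := by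
  intro u
  induction u with
  | nil => intro v ρ h; exact Or.inr ⟨ρ, rfl, h⟩
  | cons x u ih =>
    intro v ρ h
    rcases prefix_cons_cases h with rfl | ⟨t, rfl, ht⟩
    · exact Or.inl (List.nil_prefix)
    · rcases ih ht with h' | ⟨ρ', rfl, hρ'⟩
      · exact Or.inl (List.cons_prefix_cons.mpr ⟨rfl, h'⟩)
      · exact Or.inr ⟨ρ', rfl, hρ'⟩

lemma sync_prefix (i j : ℕ) (l : List ℕ) :
    ∀ ρ, ρ <+: syncOf l →
      recvOn M i j ρ <+: sentOn M i j ρ ∧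
      (sentOn M i j ρ).length ≤ (recvOn M i j ρ).length + 1 := by
  induction l with
  | nil =>
    intro ρ h
    have : ρ = [] := List.prefix_nil.mp h
    subst this; simp [sentOn, recvOn]
  | cons x l ih =>
    intro ρ h
    have hshape : syncOf (x :: l) = Act.send x :: Act.recv x :: syncOf l := rfl
    rw [hshape] at h
    rcases prefix_cons_cases h with rfl | ⟨t, rfl, ht⟩
    · simp [sentOn, recvOn]
    rcases prefix_cons_cases ht with rfl | ⟨t', rfl, ht'⟩
    · by_cases hc : M.src x = i ∧ M.dst x = j <;> simp [sentOn, recvOn, hc]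
    · have hih := ih t' ht'
      by_cases hc : M.src x = i ∧ M.dst x = j
      · constructor
        · simpa [sentOn, recvOn, hc, List.cons_prefix_cons] using hih.1
        · simpa [sentOn, recvOn, hc] using hih.2
      · constructor
        · simpa [sentOn, recvOn, hc] using hih.1
        · simpa [sentOn, recvOn, hc] using hih.2

/-- Buffer evolution along an execution. -/
lemma exec_buffer {c c' : Config} {w : Trace} (h : Exec M S c w c') (i j : ℕ) :
    c.2 i j ++ sentOn M i j w = recvOn M i j w ++ c'.2 i j := by
  induction h with
  | refl c => simp [sentOn, recvOn]
  | @step c c' c'' α w hst hex ih =>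
    cases α with
    | send x =>
      obtain ⟨hd, hfr, hbuf, hrest⟩ := hst
      rw [sentOn_cons_send, recvOn_cons_send]
      by_cases hc : M.src x = i ∧ M.dst x = j
      · obtain ⟨h1, h2⟩ := hc
        subst h1; subst h2
        rw [if_pos ⟨rfl, rfl⟩, ← ih, hbuf]
        simp
      · have hb : c'.2 i j = c.2 i j := by
          apply hrest; intro hcc; exact hc ⟨hcc.1.symm, hcc.2.symm⟩
        rw [if_neg hc, ← hb]
        simpa using ih
    | recv x =>
      obtain ⟨hd, hfr, hbuf, hrest⟩ := hst
      rw [sentOn_cons_recv, recvOn_cons_recv]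
      by_cases hc : M.src x = i ∧ M.dst x = j
      · obtain ⟨h1, h2⟩ := hc
        subst h1; subst h2
        rw [if_pos ⟨rfl, rfl⟩, hbuf]
        simpa using ih
      · have hb : c'.2 i j = c.2 i j := by
          apply hrest; intro hcc; exact hc ⟨hcc.1.symm, hcc.2.symm⟩
        rw [if_neg hc, ← hb]
        simpa using ih

/-- Extraction of local paths from an execution. -/
lemma exec_lpath {c c' : Config} {w : Trace} (h : Exec M S c w c') (i : ℕ) :
    LPath S i (c.1 i) (projPeer M i w) (c'.1 i) := by
  induction h with
  | refl c => simpa [projPeer] using LPath.nil (c.1 i)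
  | @step c c' c'' α w hst hex ih =>
    cases α with
    | send x =>
      obtain ⟨hd, hfr, hbuf, hrest⟩ := hst
      by_cases hx : M.src x = i
      · subst hx
        have : projPeer M (M.src x) (Act.send x :: w) =
            Act.send x :: projPeer M (M.src x) w := by
          simp [projPeer, peerOf]
        rw [this]
        exact LPath.cons hd ih
      · have hpr : projPeer M i (Act.send x :: w) = projPeer M i w := by
          simp [projPeer, peerOf, hx]
        rw [hpr, ← hfr i (fun e => hx e.symm)]
        exact ih
    | recv x =>
      obtain ⟨hd, hfr, hbuf, hrest⟩ := hst
      by_cases hx : M.dst x = i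
      · subst hx
        have : projPeer M (M.dst x) (Act.recv x :: w) =
            Act.recv x :: projPeer M (M.dst x) w := by
          simp [projPeer, peerOf]
        rw [this]
        exact LPath.cons hd ih
      · have hpr : projPeer M i (Act.recv x :: w) = projPeer M i w := by
          simp [projPeer, peerOf, hx]
        rw [hpr, ← hfr i (fun e => hx e.symm)]
        exact ih

end SSD
namespace SSD

variable {M : MessageSet} {S : System}


lemma lpath_nil_inv {i q q' : ℕ} (h : LPath S i q [] q') : q' = q := by
  cases h; rfl

lemma lpath_cons_inv {i q q'' : ℕ} {α : Act} {w : Trace} (h : LPath S i q (α :: w) q'') :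
    ∃ q', S.delta i q α q' ∧ LPath S i q' w q'' := by
  cases h with
  | cons hd ht => exact ⟨_, hd, ht⟩

/-- Recomposition: local paths + FIFO feasibility yield an execution. -/
lemma lpath_exec :
    ∀ (w : Trace) (c : Config) (f : ℕ → ℕ),
      (∀ i, LPath S i (c.1 i) (projPeer M i w) (f i)) →
      (∀ ρ, ρ <+: w → ∀ i j, recvOn M i j ρ <+: c.2 i j ++ sentOn M i j ρ) →
      ∃ g, Exec M S c w ((f, g) : Config) := by
  intro w
  induction w with
  | nil =>
    intro c f hp _
    have hf : ∀ i, f i = c.1 i := by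
      intro i
      have h := hp i
      simp only [projPeer, List.filter_nil] at h
      exact lpath_nil_inv h
    have hc : ((f, c.2) : Config) = c := by
      apply Prod.ext
      · funext i; exact hf i
      · rfl
    exact ⟨c.2, by rw [hc]; exact Exec.refl c⟩
  | cons α w ih =>
    intro c f hp hf
    cases α with
    | send x =>
      have hpx := hp (M.src x)
      have hproj : projPeer M (M.src x) (Act.send x :: w) =
          Act.send x :: projPeer M (M.src x) w := by simp [projPeer, peerOf]
      rw [hproj] at hpx
      obtain ⟨q', hd, htail⟩ := lpath_cons_inv hpx
      · set c₁ : Config := (Function.update c.1 (M.src x) q',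
          fun k l => if k = M.src x ∧ l = M.dst x then c.2 k l ++ [x] else c.2 k l) with hc₁
        have hstep : Step M S c (Act.send x) c₁ := by
          refine ⟨?_, ?_, ?_, ?_⟩
          · simpa [hc₁, Function.update_self] using hd
          · intro k hk; simp [hc₁, Function.update_of_ne hk]
          · simp [hc₁]
          · intro k l hkl; simp [hc₁, if_neg hkl]
        have hp' : ∀ i, LPath S i (c₁.1 i) (projPeer M i w) (f i) := by
          intro i
          by_cases hx : M.src x = i
          · subst hx; simpa [hc₁, Function.update_self] using htail
          · have hpr : projPeer M i (Act.send x :: w) = projPeer M i w := by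
              simp [projPeer, peerOf, hx]
            have := hp i
            rw [hpr] at this
            simpa [hc₁, Function.update_of_ne (fun e => hx e.symm)] using this
        have hf' : ∀ ρ, ρ <+: w → ∀ i j,
            recvOn M i j ρ <+: c₁.2 i j ++ sentOn M i j ρ := by
          intro ρ hρ i j
          have h0 := hf (Act.send x :: ρ) (List.cons_prefix_cons.mpr ⟨rfl, hρ⟩) i j
          rw [recvOn_cons_send, sentOn_cons_send] at h0
          by_cases hcc : M.src x = i ∧ M.dst x = j
          · obtain ⟨h1, h2⟩ := hcc
            have : c₁.2 i j = c.2 i j ++ [x] := by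
              simp [hc₁, ← h1, ← h2]
            rw [this, if_pos ⟨h1, h2⟩] at *
            simpa [List.append_assoc] using h0
          · have : c₁.2 i j = c.2 i j := by
              simp only [hc₁]
              exact if_neg (fun e : i = M.src x ∧ j = M.dst x => hcc ⟨e.1.symm, e.2.symm⟩)
            rw [this, if_neg hcc] at *
            simpa using h0
        obtain ⟨g, hex⟩ := ih c₁ f hp' hf'
        exact ⟨g, Exec.step hstep hex⟩
    | recv x =>
      have hpx := hp (M.dst x)
      have hproj : projPeer M (M.dst x) (Act.recv x :: w) =
          Act.recv x :: projPeer M (M.dst x) w := by simp [projPeer, peerOf]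
      rw [hproj] at hpx
      obtain ⟨q', hd, htail⟩ := lpath_cons_inv hpx
      · have hhead := hf [Act.recv x] ⟨w, rfl⟩ (M.src x) (M.dst x)
        have hr1 : recvOn M (M.src x) (M.dst x) [Act.recv x] = [x] := by
          simp [recvOn]
        have hs1 : sentOn M (M.src x) (M.dst x) [Act.recv x] = [] := by
          simp [sentOn]
        rw [hr1, hs1, List.append_nil] at hhead
        obtain ⟨r, hr⟩ := hhead
        have hcbuf : c.2 (M.src x) (M.dst x) = x :: r := by
          rw [← hr]; rfl
        set c₁ : Config := (Function.update c.1 (M.dst x) q',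
          fun k l => if k = M.src x ∧ l = M.dst x then r else c.2 k l) with hc₁
        have hstep : Step M S c (Act.recv x) c₁ := by
          refine ⟨?_, ?_, ?_, ?_⟩
          · simpa [hc₁, Function.update_self] using hd
          · intro k hk; simp [hc₁, Function.update_of_ne hk]
          · simp [hc₁, hcbuf]
          · intro k l hkl; simp [hc₁, if_neg hkl]
        have hp' : ∀ i, LPath S i (c₁.1 i) (projPeer M i w) (f i) := by
          intro i
          by_cases hx : M.dst x = i
          · subst hx; simpa [hc₁, Function.update_self] using htail
          · have hpr : projPeer M i (Act.recv x :: w) = projPeer M i w := by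
              simp [projPeer, peerOf, hx]
            have := hp i
            rw [hpr] at this
            simpa [hc₁, Function.update_of_ne (fun e => hx e.symm)] using this
        have hf' : ∀ ρ, ρ <+: w → ∀ i j,
            recvOn M i j ρ <+: c₁.2 i j ++ sentOn M i j ρ := by
          intro ρ hρ i j
          have h0 := hf (Act.recv x :: ρ) (List.cons_prefix_cons.mpr ⟨rfl, hρ⟩) i j
          rw [recvOn_cons_recv, sentOn_cons_recv] at h0
          by_cases hcc : M.src x = i ∧ M.dst x = j
          · obtain ⟨h1, h2⟩ := hcc
            have hb : c₁.2 i j = r := by simp [hc₁, ← h1, ← h2]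
            have hcb : c.2 i j = x :: r := by rw [← h1, ← h2]; exact hcbuf
            rw [if_pos ⟨h1, h2⟩, hcb] at h0
            rw [hb]
            have h0' : x :: recvOn M i j ρ <+: x :: (r ++ sentOn M i j ρ) := by
              simpa using h0
            exact (List.cons_prefix_cons.mp h0').2
          · have hb : c₁.2 i j = c.2 i j := by
              simp only [hc₁]
              exact if_neg (fun e : i = M.src x ∧ j = M.dst x => hcc ⟨e.1.symm, e.2.symm⟩)
            rw [if_neg hcc] at h0
            rw [hb]
            simpa using h0
        obtain ⟨g, hex⟩ := ih c₁ f hp' hf'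
        exact ⟨g, Exec.step hstep hex⟩

/-- Combining a synchronous prefix with a well-behaved suffix. -/
lemma combineBounded (l : List ℕ) (σ : Trace)
    (hσ : ∀ ρ, ρ <+: σ → ∀ i j,
      recvOn M i j ρ <+: sentOn M i j ρ ∧
      (sentOn M i j ρ).length ≤ (recvOn M i j ρ).length + 1) :
    BoundedFifo M 1 (syncOf l ++ σ) := by
  constructor
  · intro ρ hρ i j
    rcases prefix_append_cases _ hρ with h | ⟨ρ', rfl, hρ'⟩
    · exact (sync_prefix i j l ρ h).1
    · rw [recvOn_append, sentOn_append, sync_bal]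
      obtain ⟨t, ht⟩ := (hσ ρ' hρ' i j).1
      exact ⟨t, by rw [List.append_assoc, ht]⟩
  · intro ρ hρ i j
    rcases prefix_append_cases _ hρ with h | ⟨ρ', rfl, hρ'⟩
    · exact (sync_prefix i j l ρ h).2
    · rw [recvOn_append, sentOn_append, sync_bal]
      have := (hσ ρ' hρ' i j).2
      simp only [List.length_append]
      omega

lemma fifo_feasible {w : Trace} (hb : Fifo M w) :
    ∀ ρ, ρ <+: w → ∀ i j,
      recvOn M i j ρ <+: (initConfig S).2 i j ++ sentOn M i j ρ := by
  intro ρ hρ i j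
  simpa [initConfig] using hb ρ hρ i j

lemma final_buf {w : Trace} {f : ℕ → ℕ} {g : ℕ → ℕ → List ℕ}
    (hex : Exec M S (initConfig S) w ((f, g) : Config))
    (hbal : ∀ i j, sentOn M i j w = recvOn M i j w) :
    g = fun _ _ => [] := by
  funext i j
  have h := exec_buffer hex i j
  simp only [initConfig, List.nil_append] at h
  rw [hbal i j] at h
  have := congrArg List.length h
  simp at this
  simpa using this

lemma ksync_inl (hsync : kSync M S 1) {w : Trace} (h : Trk M S 1 w) :
    TraceOf M S (syncOf (sendProj w)) := by
  have hx : (Sum.inl (sendProj w) : List ℕ ⊕ List ℕ × Config) ∈ STc M S (Trk M S 1) :=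
    Or.inl ⟨w, h, rfl⟩
  rw [← hsync] at hx
  rcases hx with ⟨τ', h0, heq⟩ | ⟨τ', c, h0, hex, hst, heq⟩
  · obtain ⟨m, rfl⟩ := h0.2
    have hm : m = sendProj w := by
      have := (Sum.inl.injEq _ _).mp heq
      rw [sendProj_syncOf] at this
      exact this.symm
    rw [← hm]
    exact h0.1
  · simp at heq

lemma ksync_inr (hsync : kSync M S 1) {w : Trace} {c : Config} (h : Trk M S 1 w)
    (hex : Exec M S (initConfig S) w c) (hst : Stable c) :
    Exec M S (initConfig S) (syncOf (sendProj w)) c := by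
  have hx : (Sum.inr (sendProj w, c) : List ℕ ⊕ List ℕ × Config) ∈ STc M S (Trk M S 1) :=
    Or.inr ⟨w, c, h, hex, hst, rfl⟩
  rw [← hsync] at hx
  rcases hx with ⟨τ', h0, heq⟩ | ⟨τ', c', h0, hex', hst', heq⟩
  · simp at heq
  · obtain ⟨m, rfl⟩ := h0.2
    have h2 := (Sum.inr.injEq _ _).mp heq
    have hm : m = sendProj w := by
      have := congrArg Prod.fst h2
      simp [sendProj_syncOf] at this
      exact this.symm
    have hc : c' = c := by
      have := congrArg Prod.snd h2
      simpa using this.symm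
    rw [hm] at hex'
    rw [← hc]
    exact hex'

end SSD
namespace SSD

variable {M : MessageSet} {S : System}

lemma shuffle_nil_left : ∀ {u v w : Trace}, Shuffle u v w → u = [] → w = v := by
  intro u v w h
  induction h with
  | nil => intro; rfl
  | left a h ih => intro hc; cases hc
  | right b h ih => intro hu; rw [ih hu]

lemma shuffle_nil_right : ∀ {u v w : Trace}, Shuffle u v w → v = [] → w = u := by
  intro u v w h
  induction h with
  | nil => intro; rfl
  | left a h ih => intro hu; rw [ih hu]
  | right b h ih => intro hc; cases hc

lemma shuffle_six {x1 x2 y1 y2 : Act} {w : Trace}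
    (h : Shuffle [x1, x2] [y1, y2] w) :
    w = [x1, x2, y1, y2] ∨ w = [x1, y1, x2, y2] ∨ w = [x1, y1, y2, x2] ∨
    w = [y1, x1, x2, y2] ∨ w = [y1, x1, y2, x2] ∨ w = [y1, y2, x1, x2] := by
  cases h with
  | left _ h1 =>
    cases h1 with
    | left _ h2 =>
      have := shuffle_nil_left h2 rfl
      subst this; tauto
    | right _ h2 =>
      cases h2 with
      | left _ h3 =>
        have := shuffle_nil_left h3 rfl
        subst this; tauto
      | right _ h3 =>
        have := shuffle_nil_right h3 rfl
        subst this; tauto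
  | right _ h1 =>
    cases h1 with
    | left _ h2 =>
      cases h2 with
      | left _ h3 =>
        have := shuffle_nil_left h3 rfl
        subst this; tauto
      | right _ h3 =>
        have := shuffle_nil_right h3 rfl
        subst this; tauto
    | right _ h2 =>
      have := shuffle_nil_right h2 rfl
      subst this; tauto

lemma pfx4 {w1 w2 w3 w4 : Act} {ρ : Trace} (h : ρ <+: [w1, w2, w3, w4]) :
    ρ = [] ∨ ρ = [w1] ∨ ρ = [w1, w2] ∨ ρ = [w1, w2, w3] ∨ ρ = [w1, w2, w3, w4] := by
  rcases prefix_cons_cases h with rfl | ⟨t1, rfl, g1⟩; · tauto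
  rcases prefix_cons_cases g1 with rfl | ⟨t2, rfl, g2⟩; · tauto
  rcases prefix_cons_cases g2 with rfl | ⟨t3, rfl, g3⟩; · tauto
  rcases prefix_cons_cases g3 with rfl | ⟨t4, rfl, g4⟩; · tauto
  have : t4 = [] := List.prefix_nil.mp g4
  subst this; tauto

lemma pfx2 {w1 w2 : Act} {ρ : Trace} (h : ρ <+: [w1, w2]) :
    ρ = [] ∨ ρ = [w1] ∨ ρ = [w1, w2] := by
  rcases prefix_cons_cases h with rfl | ⟨t1, rfl, g1⟩; · tauto
  rcases prefix_cons_cases g1 with rfl | ⟨t2, rfl, g2⟩; · tauto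
  have : t2 = [] := List.prefix_nil.mp g2
  subst this; tauto

/-- P1 for the two-send words. -/
lemma sends_p1 (w1 w2 : ℕ) (hw : M.src w1 ≠ M.src w2) :
    ∀ ρ, ρ <+: [Act.send w1, Act.send w2] → ∀ i j,
      recvOn M i j ρ <+: sentOn M i j ρ ∧
      (sentOn M i j ρ).length ≤ (recvOn M i j ρ).length + 1 := by
  intro ρ hρ i j
  have hnot : ¬ ((M.src w1 = i ∧ M.dst w1 = j) ∧ (M.src w2 = i ∧ M.dst w2 = j)) := by
    rintro ⟨⟨e1, _⟩, ⟨e2, _⟩⟩; exact hw (e1.trans e2.symm)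
  rcases pfx2 hρ with rfl | rfl | rfl <;>
    by_cases hA : M.src w1 = i ∧ M.dst w1 = j <;>
    by_cases hB : M.src w2 = i ∧ M.dst w2 = j <;>
    simp_all [sentOn, recvOn]

/-- P1 for the six shuffles. -/
lemma six_p1 (a b : ℕ) (hab : M.src a ≠ M.src b) {σ : Trace}
    (hσ : Shuffle [Act.send a, Act.recv a] [Act.send b, Act.recv b] σ) :
    ∀ ρ, ρ <+: σ → ∀ i j,
      recvOn M i j ρ <+: sentOn M i j ρ ∧
      (sentOn M i j ρ).length ≤ (recvOn M i j ρ).length + 1 := by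
  have hnot : ∀ i j, ¬ ((M.src a = i ∧ M.dst a = j) ∧ (M.src b = i ∧ M.dst b = j)) := by
    rintro i j ⟨⟨e1, _⟩, ⟨e2, _⟩⟩; exact hab (e1.trans e2.symm)
  rcases shuffle_six hσ with rfl | rfl | rfl | rfl | rfl | rfl <;>
    intro ρ hρ i j <;>
    rcases pfx4 hρ with rfl | rfl | rfl | rfl | rfl <;>
    have hc := hnot i j <;>
    by_cases hA : M.src a = i ∧ M.dst a = j <;>
    by_cases hB : M.src b = i ∧ M.dst b = j <;>
    simp_all [sentOn, recvOn]

/-- P2 (balance) for the six shuffles. -/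
lemma six_p2 (a b : ℕ) (hab : M.src a ≠ M.src b) {σ : Trace}
    (hσ : Shuffle [Act.send a, Act.recv a] [Act.send b, Act.recv b] σ) :
    ∀ i j, sentOn M i j σ = recvOn M i j σ := by
  have hnot : ∀ i j, ¬ ((M.src a = i ∧ M.dst a = j) ∧ (M.src b = i ∧ M.dst b = j)) := by
    rintro i j ⟨⟨e1, _⟩, ⟨e2, _⟩⟩; exact hab (e1.trans e2.symm)
  rcases shuffle_six hσ with rfl | rfl | rfl | rfl | rfl | rfl <;>
    intro i j <;>
    have hc := hnot i j <;>
    by_cases hA : M.src a = i ∧ M.dst a = j <;>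
    by_cases hB : M.src b = i ∧ M.dst b = j <;>
    simp_all [sentOn, recvOn]

/-- Projections of a shuffle agree with one of the two synchronous orders. -/
lemma six_proj (a b : ℕ) (hab : M.src a ≠ M.src b) (ha : M.src a ≠ M.dst a) (hb : M.src b ≠ M.dst b) {σ : Trace}
    (hσ : Shuffle [Act.send a, Act.recv a] [Act.send b, Act.recv b] σ) (i : ℕ) :
    projPeer M i σ = projPeer M i [Act.send a, Act.recv a, Act.send b, Act.recv b] ∨
    projPeer M i σ = projPeer M i [Act.send b, Act.recv b, Act.send a, Act.recv a] := by
  rcases shuffle_six hσ with rfl | rfl | rfl | rfl | rfl | rfl <;>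
    by_cases h1 : M.src a = i <;>
    by_cases h2 : M.dst a = i <;>
    by_cases h3 : M.src b = i <;>
    by_cases h4 : M.dst b = i <;>
    simp_all [projPeer, peerOf]

/-- Swapping the two leading sends does not change projections. -/
lemma proj_swap (a b : ℕ) (hab : M.src a ≠ M.src b) (i : ℕ) (rest : Trace) :
    projPeer M i (Act.send a :: Act.send b :: rest) =
    projPeer M i (Act.send b :: Act.send a :: rest) := by
  by_cases h1 : M.src a = i <;> by_cases h3 : M.src b = i <;>
    simp_all [projPeer, peerOf]

end SSD
open SSD in
/-- Lemma 4.1: diamond property for two sends from distinct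
sources in a 1-synchronizable system. -/
theorem send_send_diagram (M : MessageSet) (S : System)
    (hM : M.WF) (hS : S.WF M) (hfin : S.FiniteDelta)
    (hsync : kSync M S 1)
    (τ : Trace) (hτ : Trk M S 0 τ)
    (a b : ℕ) (haM : a ∈ M.msgs) (hbM : b ∈ M.msgs)
    (hab : M.src a ≠ M.src b)
    (h1 : Trk M S 1 (τ ++ [Act.send a]))
    (h2 : Trk M S 1 (τ ++ [Act.send b]))
    (σ₁ σ₂ : Trace)
    (hσ₁ : Shuffle [Act.send a, Act.recv a] [Act.send b, Act.recv b] σ₁)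
    (hσ₂ : Shuffle [Act.send a, Act.recv a] [Act.send b, Act.recv b] σ₂) :
    TraceOf M S (τ ++ σ₁) ∧ TraceOf M S (τ ++ σ₂) ∧
    SEquiv M S (τ ++ σ₁) (τ ++ σ₂) := by
  classical
  obtain ⟨hτ0, hsynτ⟩ := hτ
  obtain ⟨l, rfl⟩ := hsynτ
  have ha : M.src a ≠ M.dst a := (hM.2 a haM).1
  have hb : M.src b ≠ M.dst b := (hM.2 b hbM).1
  obtain ⟨⟨d₁, E1⟩, hbf1⟩ := h1
  obtain ⟨⟨d₂, E2⟩, hbf2⟩ := h2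
  set Wab : Trace := [Act.send a, Act.recv a, Act.send b, Act.recv b] with hWab
  set Wba : Trace := [Act.send b, Act.recv b, Act.send a, Act.recv a] with hWba
  set U : Trace := [Act.send a, Act.send b] with hU
  set U' : Trace := [Act.send b, Act.send a] with hU'
  set Bw : Trace := [Act.send a, Act.send b, Act.recv a, Act.recv b] with hBw
  set Yw : Trace := [Act.send b, Act.send a, Act.recv a, Act.recv b] with hYw
  have hShBw : Shuffle [Act.send a, Act.recv a] [Act.send b, Act.recv b] Bw :=
    .left _ (.right _ (.left _ (.right _ .nil)))
  have hShYw : Shuffle [Act.send a, Act.recv a] [Act.send b, Act.recv b] Yw :=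
    .right _ (.left _ (.left _ (.right _ .nil)))
  -- the two-send traces
  set fU : ℕ → ℕ := fun i => if M.src b = i then d₂.1 i else d₁.1 i with hfU
  have hpU : ∀ i, LPath S i (S.init i) (projPeer M i (syncOf l ++ U)) (fU i) := by
    intro i
    by_cases hi : M.src b = i
    · have hsa : ¬ (M.src a = i) := fun e => hab (e.trans hi.symm)
      have e1 : projPeer M i U = projPeer M i [Act.send b] := by
        simp [hU, projPeer, peerOf, hi, hsa]
      rw [hfU]; simp only [if_pos hi]
      rw [projPeer_append, e1, ← projPeer_append]
      exact exec_lpath E2 i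
    · have e1 : projPeer M i U = projPeer M i [Act.send a] := by
        by_cases hsa : M.src a = i <;> simp [hU, projPeer, peerOf, hi, hsa]
      rw [hfU]; simp only [if_neg hi]
      rw [projPeer_append, e1, ← projPeer_append]
      exact exec_lpath E1 i
  have hBFU : BoundedFifo M 1 (syncOf l ++ U) := combineBounded l U (sends_p1 a b hab)
  obtain ⟨gU, EU⟩ := lpath_exec (syncOf l ++ U) (initConfig S) fU hpU (fifo_feasible hBFU.1)
  have TrkU : Trk M S 1 (syncOf l ++ U) := ⟨⟨_, EU⟩, hBFU⟩
  have TraceWab : TraceOf M S (syncOf l ++ Wab) := by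
    have h := ksync_inl hsync TrkU
    rw [sendProj_append, sendProj_syncOf] at h
    have hsp : sendProj U = [a, b] := rfl
    rw [hsp, syncOf_append] at h
    have hsy : syncOf [a, b] = Wab := rfl
    rwa [hsy] at h
  obtain ⟨e₁, Eab⟩ := TraceWab
  -- other order
  have hpU' : ∀ i, LPath S i (S.init i) (projPeer M i (syncOf l ++ U')) (fU i) := by
    intro i
    have e1 : projPeer M i U' = projPeer M i U := (proj_swap a b hab i []).symm
    rw [projPeer_append, e1, ← projPeer_append]
    exact hpU i
  have hBFU' : BoundedFifo M 1 (syncOf l ++ U') := combineBounded l U' (sends_p1 b a hab.symm)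
  obtain ⟨gU', EU'⟩ := lpath_exec (syncOf l ++ U') (initConfig S) fU hpU' (fifo_feasible hBFU'.1)
  have TrkU' : Trk M S 1 (syncOf l ++ U') := ⟨⟨_, EU'⟩, hBFU'⟩
  have TraceWba : TraceOf M S (syncOf l ++ Wba) := by
    have h := ksync_inl hsync TrkU'
    rw [sendProj_append, sendProj_syncOf] at h
    have hsp : sendProj U' = [b, a] := rfl
    rw [hsp, syncOf_append] at h
    have hsy : syncOf [b, a] = Wba := rfl
    rwa [hsy] at h
  obtain ⟨e₂, Eba⟩ := TraceWba
  -- the bridge execution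
  set f₁ : ℕ → ℕ := fun i => if projPeer M i Bw = projPeer M i Wab then e₁.1 i else e₂.1 i
    with hf₁
  have hpB : ∀ i, LPath S i (S.init i) (projPeer M i (syncOf l ++ Bw)) (f₁ i) := by
    intro i
    by_cases hi : projPeer M i Bw = projPeer M i Wab
    · rw [hf₁]; simp only [if_pos hi]
      rw [projPeer_append, hi, ← projPeer_append]
      exact exec_lpath Eab i
    · have hi' : projPeer M i Bw = projPeer M i Wba := by
        rcases six_proj a b hab ha hb hShBw i with h | h
        · exact absurd h hi
        · exact h
      rw [hf₁]; simp only [if_neg hi]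
      rw [projPeer_append, hi', ← projPeer_append]
      exact exec_lpath Eba i
  have hBFB : BoundedFifo M 1 (syncOf l ++ Bw) := combineBounded l Bw (six_p1 a b hab hShBw)
  obtain ⟨gB, EB⟩ := lpath_exec (syncOf l ++ Bw) (initConfig S) f₁ hpB (fifo_feasible hBFB.1)
  have hgB : gB = fun _ _ => [] := by
    refine final_buf EB (fun i j => ?_)
    rw [sentOn_append, recvOn_append, sync_bal, six_p2 a b hab hShBw i j]
  rw [hgB] at EB
  have hStable : Stable ((f₁, fun _ _ => []) : Config) := fun i j => rfl
  have TrkB : Trk M S 1 (syncOf l ++ Bw) := ⟨⟨_, EB⟩, hBFB⟩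
  have HAB : Exec M S (initConfig S) (syncOf l ++ Wab) ((f₁, fun _ _ => []) : Config) := by
    have h := ksync_inr hsync TrkB EB hStable
    rw [sendProj_append, sendProj_syncOf] at h
    have hsp : sendProj Bw = [a, b] := rfl
    rw [hsp, syncOf_append] at h
    have hsy : syncOf [a, b] = Wab := rfl
    rwa [hsy] at h
  have HA : ∀ i, LPath S i (S.init i) (projPeer M i (syncOf l ++ Wab)) (f₁ i) :=
    fun i => exec_lpath HAB i
  -- execute the swapped bridge, ending in the same configuration
  have hpY : ∀ i, LPath S i (S.init i) (projPeer M i (syncOf l ++ Yw)) (f₁ i) := by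
    intro i
    have e1 : projPeer M i Yw = projPeer M i Bw :=
      (proj_swap a b hab i [Act.recv a, Act.recv b]).symm
    rw [projPeer_append, e1, ← projPeer_append]
    exact exec_lpath EB i
  have hBFY : BoundedFifo M 1 (syncOf l ++ Yw) := combineBounded l Yw (six_p1 a b hab hShYw)
  obtain ⟨gY, EY⟩ := lpath_exec (syncOf l ++ Yw) (initConfig S) f₁ hpY (fifo_feasible hBFY.1)
  have hgY : gY = fun _ _ => [] := by
    refine final_buf EY (fun i j => ?_)
    rw [sentOn_append, recvOn_append, sync_bal, six_p2 a b hab hShYw i j]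
  rw [hgY] at EY
  have TrkY : Trk M S 1 (syncOf l ++ Yw) := ⟨⟨_, EY⟩, hBFY⟩
  have HBB : Exec M S (initConfig S) (syncOf l ++ Wba) ((f₁, fun _ _ => []) : Config) := by
    have h := ksync_inr hsync TrkY EY hStable
    rw [sendProj_append, sendProj_syncOf] at h
    have hsp : sendProj Yw = [b, a] := rfl
    rw [hsp, syncOf_append] at h
    have hsy : syncOf [b, a] = Wba := rfl
    rwa [hsy] at h
  have HB : ∀ i, LPath S i (S.init i) (projPeer M i (syncOf l ++ Wba)) (f₁ i) :=
    fun i => exec_lpath HBB i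
  -- every shuffle executes to the common stable configuration
  have main : ∀ σ, Shuffle [Act.send a, Act.recv a] [Act.send b, Act.recv b] σ →
      Exec M S (initConfig S) (syncOf l ++ σ) ((f₁, fun _ _ => []) : Config) := by
    intro σ hσ
    have hp : ∀ i, LPath S i (S.init i) (projPeer M i (syncOf l ++ σ)) (f₁ i) := by
      intro i
      rcases six_proj a b hab ha hb hσ i with h | h
      · rw [projPeer_append, h, ← projPeer_append]
        exact HA i
      · rw [projPeer_append, h, ← projPeer_append]
        exact HB i
    have hbf := combineBounded l σ (six_p1 a b hab hσ)
    obtain ⟨g, hex⟩ := lpath_exec (syncOf l ++ σ) (initConfig S) f₁ hp (fifo_feasible hbf.1)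
    have hg : g = fun _ _ => [] := by
      refine final_buf hex (fun i j => ?_)
      rw [sentOn_append, recvOn_append, sync_bal, six_p2 a b hab hσ i j]
    rw [hg] at hex
    exact hex
  exact ⟨⟨_, main σ₁ hσ₁⟩, ⟨_, main σ₂ hσ₂⟩, ⟨_, main σ₁ hσ₁, main σ₂ hσ₂⟩⟩
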